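/- Let X, Y be Polish spaces, c : X × Y → [0,∞] lower semi-continuous, π ∈ Π(μ,ν) strongly c-monotone with potentials φ, ψ, and π₀ ∈ Π(μ,ν) any transport plan with I(π₀) < ∞. Setting ξ(x,y) = φ(x) + ψ(y), the integrals E_π(ξ) and E_{π₀}(ξ) exist (in ℝ ∪ {±∞}) and satisfy E_π(ξ) = E_{π₀}(ξ); consequently I(π) = E_π(ξ) = E_{π₀}(ξ) ≤ I(π₀). -/

import Mathlib

open MeasureTheory

/-- Positive part of an extended real number, as an element of [0,∞]. -/
noncomputable def eposPart (x : EReal) : ENNReal :=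
  if x = ⊤ then ⊤ else ENNReal.ofReal x.toReal

/-- The (possibly infinite) integral of an (ℝ ∪ {±∞})-valued function:
integral of the positive part minus integral of the negative part. -/
noncomputable def eIntegral {Ω : Type*} [MeasurableSpace Ω]
    (μ : Measure Ω) (f : Ω → EReal) : EReal :=
  ((∫⁻ ω, eposPart (f ω) ∂μ : ENNReal) : EReal) -
    ((∫⁻ ω, eposPart (-(f ω)) ∂μ : ENNReal) : EReal)

/-- The integral of `f` exists (is not of the form ∞ - ∞). -/
def EIntegralExists {Ω : Type*} [MeasurableSpace Ω]
    (μ : Measure Ω) (f : Ω → EReal) : Prop :=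
  (∫⁻ ω, eposPart (f ω) ∂μ) ≠ ⊤ ∨ (∫⁻ ω, eposPart (-(f ω)) ∂μ) ≠ ⊤

/-!
Clamping both potentials to `[-n, n]` gives bounded functions `sₙ(x, y) = Tₙ φ(x) + Tₙ ψ(y)`,
whose integral against any plan depends only on the marginals, so `∫ sₙ dπ = ∫ sₙ dπ₀`.
Pointwise, `sₙ⁺ ≤ ξ⁺` and `sₙ⁻ ≤ ξ⁻` with `sₙ± → ξ±`, so by Fatou `∫ sₙ⁺ → ∫ ξ⁺` and
`∫ sₙ⁻ → ∫ ξ⁻` under any plan; hence `∫ sₙ dρ → E_ρ(ξ)` whenever `E_ρ(ξ)` exists. It exists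
under `π` because `ξ = c ≥ 0` there, and under `π₀` because `ξ⁺ ≤ c` and `I(π₀) < ∞`.
-/

open Filter Topology
open scoped ENNReal

namespace EReal

noncomputable def truncate (n : ℕ) (x : EReal) : ℝ := (max (min x n) (-n)).toReal

lemma neg_natCast_le_natCast (n : ℕ) : (-n : EReal) ≤ n :=
  EReal.coe_le_coe_iff.2 (neg_le_self n.cast_nonneg)

lemma coe_truncate (n : ℕ) (x : EReal) : (truncate n x : EReal) = max (min x n) (-n) :=
  coe_toReal
    (ne_top_of_le_ne_top (coe_ne_top n) (max_le (min_le_right _ _) (neg_natCast_le_natCast n)))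
    (ne_bot_of_le_ne_bot (coe_ne_bot (-n)) (le_max_right _ _))

lemma abs_truncate_le (n : ℕ) (x : EReal) : |truncate n x| ≤ n := by
  rw [abs_le, ← EReal.coe_le_coe_iff, ← EReal.coe_le_coe_iff, coe_truncate]
  exact ⟨le_max_right _ _, max_le (min_le_right _ _) (neg_natCast_le_natCast n)⟩

lemma truncate_neg (n : ℕ) (x : EReal) : truncate n (-x) = -truncate n x := by
  rw [← EReal.coe_eq_coe_iff, coe_neg, coe_truncate, coe_truncate, neg_strictAnti.antitone.map_max,
    neg_strictAnti.antitone.map_min, neg_neg, max_min_distrib_right,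
    max_eq_left (neg_natCast_le_natCast n)]

@[fun_prop]
lemma measurable_truncate (n : ℕ) : Measurable (truncate n) :=
  ((measurable_id.min measurable_const).max measurable_const).ereal_toReal

lemma tendsto_truncate (x : EReal) : Tendsto (fun n => (truncate n x : EReal)) atTop (𝓝 x) := by
  have htop : Tendsto (fun n : ℕ => (n : EReal)) atTop (𝓝 ⊤) :=
    tendsto_coe_nhds_top_iff.2 tendsto_natCast_atTop_atTop
  have hbot : Tendsto (fun n : ℕ => (-n : EReal)) atTop (𝓝 ⊥) :=
    (continuous_neg.tendsto ⊤).comp htop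
  simp only [coe_truncate]
  simpa using (tendsto_const_nhds.min htop).max hbot

lemma tendsto_truncate_add {x y : EReal} (h : x ≠ ⊤ ∨ y ≠ ⊥) (h' : x ≠ ⊥ ∨ y ≠ ⊤) :
    Tendsto (fun n => ((truncate n x + truncate n y : ℝ) : EReal)) atTop (𝓝 (x + y)) := by
  simp only [coe_add]
  exact (continuousAt_add h h').tendsto.comp
    ((tendsto_truncate x).prodMk_nhds (tendsto_truncate y))

lemma ofReal_truncate_add_le (n : ℕ) (x y : EReal) :
    ENNReal.ofReal (truncate n x + truncate n y) ≤ (x + y).toENNReal := by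
  have truncate_eq_neg : ∀ z : EReal, z ≤ -n → truncate n z = -n := fun z hz => by
    rw [← EReal.coe_eq_coe_iff, coe_truncate]
    exact max_eq_right ((min_le_left _ _).trans hz)
  have truncate_le_self : ∀ z : EReal, ¬z ≤ -n → (truncate n z : EReal) ≤ z := fun z hz => by
    rw [coe_truncate]
    exact max_le (min_le_left _ _) (not_le.1 hz).le
  by_cases hx : x ≤ -n
  · rw [truncate_eq_neg x hx,
      ENNReal.ofReal_of_nonpos (by linarith [(abs_le.1 (abs_truncate_le n y)).2])]
    exact zero_le
  by_cases hy : y ≤ -n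
  · rw [truncate_eq_neg y hy,
      ENNReal.ofReal_of_nonpos (by linarith [(abs_le.1 (abs_truncate_le n x)).2])]
    exact zero_le
  calc ENNReal.ofReal (truncate n x + truncate n y)
      = ((truncate n x + truncate n y : ℝ) : EReal).toENNReal := rfl
    _ ≤ (x + y).toENNReal :=
      toENNReal_le_toENNReal <| by
        rw [coe_add]; exact add_le_add (truncate_le_self x hx) (truncate_le_self y hy)

lemma ofReal_neg_truncate_add_le (n : ℕ) {x y : EReal} (h : x ≠ ⊤ ∨ y ≠ ⊥)
    (h' : x ≠ ⊥ ∨ y ≠ ⊤) :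
    ENNReal.ofReal (-(truncate n x + truncate n y)) ≤ (-(x + y)).toENNReal := by
  rw [neg_add h' h, _root_.neg_add, ← truncate_neg, ← truncate_neg]
  exact ofReal_truncate_add_le n (-x) (-y)

theorem tendsto_coe_ennreal_sub {ι : Type*} {l : Filter ι} {f g : ι → ℝ≥0∞} {a b : ℝ≥0∞}
    (hab : a ≠ ⊤ ∨ b ≠ ⊤) (hf : Tendsto f l (𝓝 a)) (hg : Tendsto g l (𝓝 b)) :
    Tendsto (fun i => (f i : EReal) - g i) l (𝓝 ((a : EReal) - b)) := by
  have hpair :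
      Tendsto (fun i => ((f i : EReal), -(g i : EReal))) l (𝓝 ((a : EReal), -(b : EReal))) :=
    ((continuous_coe_ennreal_ereal.tendsto a).comp hf).prodMk_nhds
      ((continuous_neg.tendsto _).comp ((continuous_coe_ennreal_ereal.tendsto b).comp hg))
  have hadd : ContinuousAt (fun p : EReal × EReal => p.1 + p.2) ((a : EReal), -(b : EReal)) :=
    continuousAt_add (by simpa [coe_ennreal_eq_top_iff] using hab) (Or.inl (coe_ennreal_ne_bot a))
  exact hadd.tendsto.comp hpair

end EReal

section Integral

variable {α : Type*} [MeasurableSpace α] {μ : Measure α}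

theorem tendsto_lintegral_of_le_of_tendsto {f : ℕ → α → ℝ≥0∞} {g : α → ℝ≥0∞}
    (hf : ∀ n, AEMeasurable (f n) μ) (hle : ∀ n, f n ≤ᵐ[μ] g)
    (hlim : ∀ᵐ a ∂μ, Tendsto (fun n => f n a) atTop (𝓝 (g a))) :
    Tendsto (fun n => ∫⁻ a, f n a ∂μ) atTop (𝓝 (∫⁻ a, g a ∂μ)) := by
  refine tendsto_of_le_liminf_of_limsup_le ?_ ?_
  · calc ∫⁻ a, g a ∂μ = ∫⁻ a, liminf (fun n => f n a) atTop ∂μ :=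
          lintegral_congr_ae (hlim.mono fun a ha => ha.liminf_eq.symm)
      _ ≤ liminf (fun n => ∫⁻ a, f n a ∂μ) atTop := lintegral_liminf_le' hf
  · exact limsup_le_of_le (by isBoundedDefault)
      (Eventually.of_forall fun n => lintegral_mono_ae (hle n))

theorem MeasureTheory.Integrable.coe_integral_eq_lintegral_sub {f : α → ℝ}
    (hf : Integrable f μ) :
    ((∫ a, f a ∂μ : ℝ) : EReal) =
      (∫⁻ a, ENNReal.ofReal (f a) ∂μ : EReal) - (∫⁻ a, ENNReal.ofReal (-f a) ∂μ : EReal) := by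
  rw [integral_eq_lintegral_pos_part_sub_lintegral_neg_part hf, EReal.coe_sub,
    EReal.coe_ennreal_toReal hf.lintegral_lt_top.ne,
    EReal.coe_ennreal_toReal (x := ∫⁻ a, ENNReal.ofReal (-f a) ∂μ) hf.neg.lintegral_lt_top.ne]

theorem integrable_truncate_comp [IsFiniteMeasure μ] {f : α → EReal} (hf : Measurable f)
    (n : ℕ) : Integrable (fun a => EReal.truncate n (f a)) μ :=
  .of_bound ((EReal.measurable_truncate n).comp hf).aestronglyMeasurable n
    (ae_of_all _ fun a => EReal.abs_truncate_le n (f a))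

theorem integral_fst_add_snd {X Y : Type*} [MeasurableSpace X] [MeasurableSpace Y]
    {ρ : Measure (X × Y)} {f : X → ℝ} {g : Y → ℝ} (hf : Integrable f (ρ.map Prod.fst))
    (hg : Integrable g (ρ.map Prod.snd)) :
    ∫ p, f p.1 + g p.2 ∂ρ = ∫ x, f x ∂(ρ.map Prod.fst) + ∫ y, g y ∂(ρ.map Prod.snd) := by
  rw [integral_map measurable_fst.aemeasurable hf.aestronglyMeasurable,
    integral_map measurable_snd.aemeasurable hg.aestronglyMeasurable]
  exact integral_add (hf.comp_measurable measurable_fst) (hg.comp_measurable measurable_snd)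

end Integral

-- `eposPart` is definitionally `EReal.toENNReal`, whose API is used below.
section eIntegral

variable {Ω : Type*} [MeasurableSpace Ω] {ρ : Measure Ω} {f : Ω → EReal}

theorem lintegral_eposPart_neg_eq_zero (hf : 0 ≤ᵐ[ρ] f) : ∫⁻ ω, eposPart (-f ω) ∂ρ = 0 :=
  (lintegral_congr_ae (hf.mono fun _ hω =>
    EReal.toENNReal_of_nonpos ((EReal.neg_le_neg_iff.2 hω).trans_eq neg_zero))).trans
    lintegral_zero

theorem eIntegralExists_of_nonneg_ae (hf : 0 ≤ᵐ[ρ] f) : EIntegralExists ρ f :=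
  .inr ((lintegral_eposPart_neg_eq_zero hf).trans_ne ENNReal.zero_ne_top)

theorem eIntegral_of_nonneg_ae (hf : 0 ≤ᵐ[ρ] f) :
    eIntegral ρ f = ((∫⁻ ω, eposPart (f ω) ∂ρ : ℝ≥0∞) : EReal) := by
  rw [eIntegral, lintegral_eposPart_neg_eq_zero hf, EReal.coe_ennreal_zero, sub_zero]

theorem eIntegral_le_lintegral_eposPart (ρ : Measure Ω) (f : Ω → EReal) :
    eIntegral ρ f ≤ ((∫⁻ ω, eposPart (f ω) ∂ρ : ℝ≥0∞) : EReal) :=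
  (EReal.sub_le_sub le_rfl (EReal.coe_ennreal_nonneg _)).trans_eq (sub_zero _)

open EReal in
theorem tendsto_integral_truncate_add (ρ : Measure Ω) [IsFiniteMeasure ρ] {u v : Ω → EReal}
    (hu : Measurable u) (hv : Measurable v)
    (h : ∀ ω, u ω ≠ ⊤ ∨ v ω ≠ ⊥) (h' : ∀ ω, u ω ≠ ⊥ ∨ v ω ≠ ⊤)
    (hex : EIntegralExists ρ fun ω => u ω + v ω) :
    Tendsto (fun n => ((∫ ω, truncate n (u ω) + truncate n (v ω) ∂ρ : ℝ) : EReal)) atTop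
      (𝓝 (eIntegral ρ fun ω => u ω + v ω)) := by
  have hmeas : ∀ n, Measurable fun ω => truncate n (u ω) + truncate n (v ω) := by fun_prop
  have hint : ∀ n, Integrable (fun ω => truncate n (u ω) + truncate n (v ω)) ρ := fun n =>
    (integrable_truncate_comp hu n).add (integrable_truncate_comp hv n)
  have hpos := tendsto_lintegral_of_le_of_tendsto (μ := ρ)
    (fun n => (hmeas n).ennreal_ofReal.aemeasurable)
    (fun n => ae_of_all _ fun ω => ofReal_truncate_add_le n (u ω) (v ω))
    (ae_of_all _ fun ω =>
      (continuous_toENNReal.tendsto _).comp (tendsto_truncate_add (h ω) (h' ω)))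
  have hneg := tendsto_lintegral_of_le_of_tendsto (μ := ρ)
    (fun n => (hmeas n).neg.ennreal_ofReal.aemeasurable)
    (fun n => ae_of_all _ fun ω => ofReal_neg_truncate_add_le n (h ω) (h' ω))
    (ae_of_all _ fun ω => ((continuous_toENNReal.comp continuous_neg).tendsto _).comp
      (tendsto_truncate_add (h ω) (h' ω)))
  simp only [(hint _).coe_integral_eq_lintegral_sub]
  exact tendsto_coe_ennreal_sub hex hpos hneg

end eIntegral

open EReal in
theorem eIntegral_fst_add_snd_eq_of_map_eq {X Y : Type*} [MeasurableSpace X] [MeasurableSpace Y]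
    {ρ ρ' : Measure (X × Y)} [IsFiniteMeasure ρ] [IsFiniteMeasure ρ']
    (hfst : ρ.map Prod.fst = ρ'.map Prod.fst) (hsnd : ρ.map Prod.snd = ρ'.map Prod.snd)
    {φ : X → EReal} {ψ : Y → EReal} (hφ : Measurable φ) (hψ : Measurable ψ)
    (hφtop : ∀ x, φ x ≠ ⊤) (hψtop : ∀ y, ψ y ≠ ⊤)
    (hex : EIntegralExists ρ fun p => φ p.1 + ψ p.2)
    (hex' : EIntegralExists ρ' fun p => φ p.1 + ψ p.2) :
    eIntegral ρ (fun p => φ p.1 + ψ p.2) = eIntegral ρ' (fun p => φ p.1 + ψ p.2) := by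
  have hmarg : ∀ n, ∫ p, truncate n (φ p.1) + truncate n (ψ p.2) ∂ρ =
      ∫ p, truncate n (φ p.1) + truncate n (ψ p.2) ∂ρ' := fun n => by
    rw [integral_fst_add_snd (integrable_truncate_comp hφ n) (integrable_truncate_comp hψ n),
      integral_fst_add_snd (integrable_truncate_comp hφ n) (integrable_truncate_comp hψ n),
      hfst, hsnd]
  have hlim := fun (ρ : Measure (X × Y)) [IsFiniteMeasure ρ] =>
    tendsto_integral_truncate_add ρ (hφ.comp measurable_fst) (hψ.comp measurable_snd)
      (fun p => .inl (hφtop p.1)) (fun p => .inr (hψtop p.2))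
  exact tendsto_nhds_unique ((hlim ρ hex).congr fun n => congrArg _ (hmarg n)) (hlim ρ' hex')

theorem potential_integrals_equal_general
    {X Y : Type*} [MeasurableSpace X] [MeasurableSpace Y]
    (c : X × Y → ENNReal)
    (μ : Measure X) (ν : Measure Y)
    (π : Measure (X × Y)) [IsProbabilityMeasure π]
    (hπ1 : π.map Prod.fst = μ) (hπ2 : π.map Prod.snd = ν)
    (φ : X → EReal) (ψ : Y → EReal) (hφm : Measurable φ) (hψm : Measurable ψ)
    (hφtop : ∀ x, φ x ≠ ⊤) (hψtop : ∀ y, ψ y ≠ ⊤)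
    (hineq : ∀ x y, φ x + ψ y ≤ (c (x, y) : EReal))
    (heq : ∀ᵐ p ∂π, φ p.1 + ψ p.2 = (c p : EReal))
    (π₀ : Measure (X × Y)) [IsProbabilityMeasure π₀]
    (hπ₀1 : π₀.map Prod.fst = μ) (hπ₀2 : π₀.map Prod.snd = ν)
    (hI₀ : ∫⁻ p, c p ∂π₀ ≠ ⊤) :
    EIntegralExists π (fun p => φ p.1 + ψ p.2) ∧
    EIntegralExists π₀ (fun p => φ p.1 + ψ p.2) ∧
    eIntegral π (fun p => φ p.1 + ψ p.2) = eIntegral π₀ (fun p => φ p.1 + ψ p.2) ∧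
    ((∫⁻ p, c p ∂π : ENNReal) : EReal) = eIntegral π (fun p => φ p.1 + ψ p.2) ∧
    eIntegral π₀ (fun p => φ p.1 + ψ p.2) ≤ ((∫⁻ p, c p ∂π₀ : ENNReal) : EReal) := by
  have hξ : 0 ≤ᵐ[π] fun p => φ p.1 + ψ p.2 :=
    heq.mono fun p hp => (EReal.coe_ennreal_nonneg _).trans_eq hp.symm
  have hpos_π : ∫⁻ p, eposPart (φ p.1 + ψ p.2) ∂π = ∫⁻ p, c p ∂π :=
    lintegral_congr_ae (heq.mono fun p hp => (congrArg _ hp).trans EReal.toENNReal_coe)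
  have hpos_π₀ : ∫⁻ p, eposPart (φ p.1 + ψ p.2) ∂π₀ ≤ ∫⁻ p, c p ∂π₀ := lintegral_mono fun p =>
    (EReal.toENNReal_le_toENNReal (hineq p.1 p.2)).trans_eq EReal.toENNReal_coe
  have hex_π₀ : EIntegralExists π₀ fun p => φ p.1 + ψ p.2 :=
    .inl (ne_top_of_le_ne_top hI₀ hpos_π₀)
  refine ⟨eIntegralExists_of_nonneg_ae hξ, hex_π₀,
    eIntegral_fst_add_snd_eq_of_map_eq (hπ1.trans hπ₀1.symm) (hπ2.trans hπ₀2.symm) hφm hψm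
      hφtop hψtop (eIntegralExists_of_nonneg_ae hξ) hex_π₀,
    by rw [eIntegral_of_nonneg_ae hξ, hpos_π], ?_⟩
  exact (eIntegral_le_lintegral_eposPart π₀ _).trans
    (EReal.coe_ennreal_le_coe_ennreal_iff.2 hpos_π₀)

/-- for a strongly c-monotone plan π with potentials φ, ψ and any
competitor π₀ with finite cost, setting ξ(x,y) = φ(x) + ψ(y), the integrals
E_π(ξ) and E_{π₀}(ξ) exist, are equal, and I(π) = E_π(ξ) = E_{π₀}(ξ) ≤ I(π₀). -/
theorem potential_integrals_equal
    {X Y : Type*} [TopologicalSpace X] [PolishSpace X] [MeasurableSpace X] [BorelSpace X]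
    [TopologicalSpace Y] [PolishSpace Y] [MeasurableSpace Y] [BorelSpace Y]
    (c : X × Y → ENNReal) (hc : LowerSemicontinuous c)
    (μ : Measure X) (ν : Measure Y) [IsProbabilityMeasure μ] [IsProbabilityMeasure ν]
    (π : Measure (X × Y)) [IsProbabilityMeasure π]
    (hπ1 : π.map Prod.fst = μ) (hπ2 : π.map Prod.snd = ν)
    (φ : X → EReal) (ψ : Y → EReal) (hφm : Measurable φ) (hψm : Measurable ψ)
    (hφtop : ∀ x, φ x ≠ ⊤) (hψtop : ∀ y, ψ y ≠ ⊤)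
    (hineq : ∀ x y, φ x + ψ y ≤ (c (x, y) : EReal))
    (heq : ∀ᵐ p ∂π, φ p.1 + ψ p.2 = (c p : EReal))
    (π₀ : Measure (X × Y)) [IsProbabilityMeasure π₀]
    (hπ₀1 : π₀.map Prod.fst = μ) (hπ₀2 : π₀.map Prod.snd = ν)
    (hI₀ : ∫⁻ p, c p ∂π₀ ≠ ⊤) :
    EIntegralExists π (fun p => φ p.1 + ψ p.2) ∧
    EIntegralExists π₀ (fun p => φ p.1 + ψ p.2) ∧
    eIntegral π (fun p => φ p.1 + ψ p.2) = eIntegral π₀ (fun p => φ p.1 + ψ p.2) ∧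
    ((∫⁻ p, c p ∂π : ENNReal) : EReal) = eIntegral π (fun p => φ p.1 + ψ p.2) ∧
    eIntegral π₀ (fun p => φ p.1 + ψ p.2) ≤ ((∫⁻ p, c p ∂π₀ : ENNReal) : EReal) :=
  potential_integrals_equal_general c μ ν π hπ1 hπ2 φ ψ hφm hψm hφtop hψtop hineq heq π₀ hπ₀1 hπ₀2
    hI₀
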